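/- arXiv:2007.12576 — 2 statements merged into one kernel-verified Lean document; each statement's English description precedes it below -/
import Mathlib

section
/- Let β ∈ (0,1), let A₁, A₂ be positive definite complex matrices and B₁, B₂ be positive semidefinite complex matrices, with A₁, B₁ of the same size and A₂, B₂ of the same size. Then (A₁ ⊗ A₂) #_β (B₁ ⊗ B₂) = (A₁ #_β B₁) ⊗ (A₂ #_β B₂), where ⊗ denotes the Kronecker product. -/
open Matrix Filter
open scoped Kronecker Classical ComplexOrder

noncomputable def Matrix.rpowH {n : Type*} [Fintype n] [DecidableEq n]
    (A : Matrix n n ℂ) (r : ℝ) : Matrix n n ℂ :=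
  if hA : A.IsHermitian then
    (hA.eigenvectorUnitary : Matrix n n ℂ) *
      Matrix.diagonal (fun i => ((hA.eigenvalues i ^ r : ℝ) : ℂ)) *
      star (hA.eigenvectorUnitary : Matrix n n ℂ)
  else 0

noncomputable def Matrix.gmean {n : Type*} [Fintype n] [DecidableEq n]
    (β : ℝ) (S A : Matrix n n ℂ) : Matrix n n ℂ :=
  S.rpowH (1/2) * ((S.rpowH (-(1/2)) * A * S.rpowH (-(1/2))).rpowH β) * S.rpowH (1/2)

noncomputable def QSharp {n : Type*} [Fintype n] [DecidableEq n]
    (α : ℝ) (ρ σ : Matrix n n ℂ) : ℝ :=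
  sInf { t : ℝ | ∃ A : Matrix n n ℂ, A.PosSemidef ∧
    (Matrix.gmean (1/α) σ A - ρ).PosSemidef ∧ t = A.trace.re }

noncomputable def DSharp {n : Type*} [Fintype n] [DecidableEq n]
    (α : ℝ) (ρ σ : Matrix n n ℂ) : ℝ :=
  1/(α-1) * Real.logb 2 (QSharp α ρ σ)

noncomputable def opNorm {n : Type*} [Fintype n] [DecidableEq n] (A : Matrix n n ℂ) : ℝ :=
  ‖(Matrix.toEuclideanCLM (𝕜 := ℂ) A : EuclideanSpace ℂ n →L[ℂ] EuclideanSpace ℂ n)‖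

noncomputable def Dtilde {n : Type*} [Fintype n] [DecidableEq n]
    (α : ℝ) (ρ σ : Matrix n n ℂ) : ℝ :=
  1/(α-1) * Real.logb 2
    (((σ.rpowH ((1-α)/(2*α)) * ρ * σ.rpowH ((1-α)/(2*α))).rpowH α).trace.re)

noncomputable def Dhat {n : Type*} [Fintype n] [DecidableEq n]
    (α : ℝ) (ρ σ : Matrix n n ℂ) : ℝ :=
  1/(α-1) * Real.logb 2
    ((σ.rpowH (1/2) * ((σ.rpowH (-(1/2)) * ρ * σ.rpowH (-(1/2))).rpowH α) * σ.rpowH (1/2)).trace.re)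

/-!
Diagonalise `A = U diag(a) U*` and `B = V diag(b) V*`; then `A ⊗ B = (U ⊗ V) diag(aᵢ bⱼ) (U ⊗ V)*`.
By uniqueness of the continuous functional calculus, `f` applied to a matrix `W diag(c) W*` is
`W diag(f ∘ c) W*` for every such unitary diagonalisation, not only the one chosen by `rpowH`;
hence `f (A ⊗ B) = f A ⊗ f B` whenever `f` is multiplicative on the spectra. For `t ↦ t ^ r` and
positive semidefinite factors this gives `(A ⊗ B) ^ r = A ^ r ⊗ B ^ r`. By the mixed-product rule the
middle factor of `(A₁ ⊗ A₂) #_β (B₁ ⊗ B₂)` is the Kronecker product of the two middle factors, so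
every power in the geometric mean splits.
-/

open Unitary
open scoped MatrixOrder

namespace Matrix

variable {n m 𝕜 : Type*} [Fintype n] [DecidableEq n] [Fintype m] [DecidableEq m] [RCLike 𝕜]

noncomputable def conjDiagonalStarAlgHom (U : unitary (Matrix n n 𝕜)) {s : Set ℝ} (d : n → s) :
    C(s, ℝ) →⋆ₐ[ℝ] Matrix n n 𝕜 where
  toFun g := conjStarAlgAut ℝ _ U (diagonal (RCLike.ofReal ∘ g ∘ d))
  map_zero' := by simp [Pi.zero_def, Function.comp_def]
  map_one' := by simp [Pi.one_def, Function.comp_def]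
  map_mul' f g := by simp [← map_mul, -conjStarAlgAut_apply, Function.comp_def]
  map_add' f g := by simp [← map_add, -conjStarAlgAut_apply, Function.comp_def]
  commutes' r := by
    simpa [Function.comp_def, algebraMap_eq_diagonal, Pi.algebraMap_def] using
      AlgHomClass.commutes (conjStarAlgAut ℝ _ U) r
  map_star' f := by
    simp [← map_star, -conjStarAlgAut_apply, star_eq_conjTranspose, Function.comp_def]

lemma spectrum_conj_diagonal (U : unitary (Matrix n n 𝕜)) (d : n → ℝ) :
    spectrum ℝ (conjStarAlgAut 𝕜 _ U (diagonal (RCLike.ofReal ∘ d))) = Set.range d := by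
  ext x
  rw [conjStarAlgAut_apply, Unitary.spectrum_star_right_conjugate, ← spectrum.algebraMap_mem_iff 𝕜,
    spectrum_diagonal]
  simp

lemma cfc_conj_diagonal (U : unitary (Matrix n n 𝕜)) (d : n → ℝ) (f : ℝ → ℝ) :
    cfc f (conjStarAlgAut 𝕜 _ U (diagonal (RCLike.ofReal ∘ d))) =
      conjStarAlgAut 𝕜 _ U (diagonal (RCLike.ofReal ∘ f ∘ d)) := by
  set A := conjStarAlgAut 𝕜 _ U (diagonal (RCLike.ofReal ∘ d))
  have hA : IsSelfAdjoint A := by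
    simp [A, IsSelfAdjoint, star_eq_conjTranspose, diagonal_conjTranspose, Pi.star_def,
      Function.comp_def, mul_assoc]
  have hd : ∀ i, d i ∈ spectrum ℝ A := fun i => spectrum_conj_diagonal U d ▸ Set.mem_range_self i
  let φ := conjDiagonalStarAlgHom U (fun i => (⟨d i, hd i⟩ : spectrum ℝ A))
  have hfin := A.finite_real_spectrum
  have : Finite (spectrum ℝ A) := hfin
  have : FiniteDimensional ℝ C(spectrum ℝ A, ℝ) :=
    .of_injective (ContinuousMap.coeFnLinearMap ℝ (M := ℝ)) DFunLike.coe_injective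
  have hφ : cfcHom hA = φ := cfcHom_eq_of_continuous_of_map_id hA φ
    (LinearMap.continuous_of_finiteDimensional φ.toLinearMap) rfl
  rw [cfc_apply f A hA (hfin.continuousOn f), hφ]
  rfl

lemma conjStarAlgAut_kronecker (U : unitary (Matrix n n 𝕜)) (V : unitary (Matrix m m 𝕜))
    (X : Matrix n n 𝕜) (Y : Matrix m m 𝕜) :
    conjStarAlgAut 𝕜 _ U X ⊗ₖ conjStarAlgAut 𝕜 _ V Y =
      conjStarAlgAut 𝕜 (Matrix (n × m) (n × m) 𝕜)
        ⟨U ⊗ₖ V, kronecker_mem_unitary U.2 V.2⟩ (X ⊗ₖ Y) := by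
  simp only [conjStarAlgAut_apply, mul_kronecker_mul, star_eq_conjTranspose,
    conjTranspose_kronecker]

lemma cfc_kronecker_of_map_mul {A : Matrix n n 𝕜} {B : Matrix m m 𝕜} (hA : A.IsHermitian)
    (hB : B.IsHermitian) {f : ℝ → ℝ}
    (hf : ∀ x ∈ spectrum ℝ A, ∀ y ∈ spectrum ℝ B, f (x * y) = f x * f y) :
    cfc f (A ⊗ₖ B) = cfc f A ⊗ₖ cfc f B := by
  obtain ⟨U, d, rfl⟩ : ∃ U d, A = conjStarAlgAut 𝕜 _ U (diagonal (RCLike.ofReal ∘ d)) :=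
    ⟨_, _, hA.spectral_theorem⟩
  obtain ⟨V, e, rfl⟩ : ∃ V e, B = conjStarAlgAut 𝕜 _ V (diagonal (RCLike.ofReal ∘ e)) :=
    ⟨_, _, hB.spectral_theorem⟩
  simp only [spectrum_conj_diagonal, Set.forall_mem_range] at hf
  have hdiag (a : n → ℝ) (b : m → ℝ) : diagonal (RCLike.ofReal ∘ a) ⊗ₖ diagonal (RCLike.ofReal ∘ b) =
      diagonal (RCLike.ofReal ∘ fun p : n × m => a p.1 * b p.2 : n × m → 𝕜) := by
    simp [diagonal_kronecker_diagonal, Function.comp_def]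
  rw [conjStarAlgAut_kronecker, hdiag, cfc_conj_diagonal, cfc_conj_diagonal, cfc_conj_diagonal,
    conjStarAlgAut_kronecker, hdiag]
  simp only [Function.comp_def, hf]

lemma rpowH_eq_cfc {A : Matrix n n ℂ} (hA : A.IsHermitian) (r : ℝ) :
    A.rpowH r = cfc (· ^ r : ℝ → ℝ) A := by
  rw [rpowH, dif_pos hA, hA.cfc_eq, IsHermitian.cfc, conjStarAlgAut_apply]
  rfl

lemma isHermitian_rpowH (A : Matrix n n ℂ) (r : ℝ) : (A.rpowH r).IsHermitian := by
  by_cases hA : A.IsHermitian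
  · rw [rpowH_eq_cfc hA]
    exact cfc_predicate _ A
  · simp [rpowH, hA]

lemma rpowH_kronecker {A : Matrix n n ℂ} {B : Matrix m m ℂ} (hA : A.PosSemidef)
    (hB : B.PosSemidef) (r : ℝ) : (A ⊗ₖ B).rpowH r = A.rpowH r ⊗ₖ B.rpowH r := by
  rw [rpowH_eq_cfc hA.1, rpowH_eq_cfc hB.1, rpowH_eq_cfc (hA.kronecker hB).1]
  exact cfc_kronecker_of_map_mul hA.1 hB.1 fun x hx y hy =>
    Real.mul_rpow (spectrum_nonneg_of_nonneg hA.nonneg hx) (spectrum_nonneg_of_nonneg hB.nonneg hy)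

lemma PosSemidef.rpowH_mul_mul_rpowH {B : Matrix n n ℂ} (hB : B.PosSemidef) (A : Matrix n n ℂ)
    (r : ℝ) : (A.rpowH r * B * A.rpowH r).PosSemidef := by
  simpa only [(isHermitian_rpowH A r).eq] using hB.mul_mul_conjTranspose_same (A.rpowH r)

end Matrix

theorem gmean_kronecker_general
    {n₁ n₂ : Type*} [Fintype n₁] [DecidableEq n₁] [Fintype n₂] [DecidableEq n₂]
    (β : ℝ)
    (A₁ : Matrix n₁ n₁ ℂ) (A₂ : Matrix n₂ n₂ ℂ)
    (B₁ : Matrix n₁ n₁ ℂ) (B₂ : Matrix n₂ n₂ ℂ)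
    (hA₁ : A₁.PosDef) (hA₂ : A₂.PosDef)
    (hB₁ : B₁.PosSemidef) (hB₂ : B₂.PosSemidef) :
    Matrix.gmean β (A₁ ⊗ₖ A₂) (B₁ ⊗ₖ B₂)
      = (Matrix.gmean β A₁ B₁) ⊗ₖ (Matrix.gmean β A₂ B₂) := by
  have hA := rpowH_kronecker hA₁.posSemidef hA₂.posSemidef
  have hC := rpowH_kronecker (hB₁.rpowH_mul_mul_rpowH A₁ (-(1 / 2)))
    (hB₂.rpowH_mul_mul_rpowH A₂ (-(1 / 2))) β
  simp only [gmean, hA, ← mul_kronecker_mul, hC]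

/-- the β-weighted matrix geometric mean is multiplicative under
Kronecker products: (A₁ ⊗ A₂) #_β (B₁ ⊗ B₂) = (A₁ #_β B₁) ⊗ (A₂ #_β B₂). -/
theorem gmean_kronecker
    {n₁ n₂ : Type*} [Fintype n₁] [DecidableEq n₁] [Fintype n₂] [DecidableEq n₂]
    (β : ℝ) (hβ0 : 0 < β) (hβ1 : β < 1)
    (A₁ : Matrix n₁ n₁ ℂ) (A₂ : Matrix n₂ n₂ ℂ)
    (B₁ : Matrix n₁ n₁ ℂ) (B₂ : Matrix n₂ n₂ ℂ)
    (hA₁ : A₁.PosDef) (hA₂ : A₂.PosDef)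
    (hB₁ : B₁.PosSemidef) (hB₂ : B₂.PosSemidef) :
    Matrix.gmean β (A₁ ⊗ₖ A₂) (B₁ ⊗ₖ B₂)
      = (Matrix.gmean β A₁ B₁) ⊗ₖ (Matrix.gmean β A₂ B₂) :=
  gmean_kronecker_general β A₁ A₂ B₁ B₂ hA₁ hA₂ hB₁ hB₂
end

section
/- Let n, d be positive integers and let X be a complex matrix indexed by the type of functions (Fin n → Fin d) that is permutation-invariant: for every permutation π of Fin n, P(π) · X = X · P(π), where P(π) is the permutation matrix with entries P(π)(f,g) = 1 if f = g ∘ π⁻¹ and 0 otherwise. Then the spectrum of X (the set of eigenvalues of X in ℂ) has cardinality at most (n+1)^d · (n+d)^(d²). -/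
/-!
A matrix commuting with every `permMatrix n d π` lies in the centralizer of these matrices, a
subalgebra whose elements are invariant under the diagonal action `(f, g) ↦ (f ∘ π, g ∘ π)`.
Two pairs lie in the same orbit exactly when they have the same type, i.e. the same number of
indices `i` with `(f i, g i) = (a, b)` for each `(a, b)`, so such a matrix is a function of the
type and the centralizer has dimension at most `(n + 1) ^ (d ^ 2)`. An element of a
finite-dimensional algebra has at most as many eigenvalues as the degree of its minimal
polynomial, which is at most the dimension.
-/

open Matrix

/-- The permutation matrix P(π) on (ℂ^d)^{⊗n}, with entries
P(π)(f,g) = 1 if f = g ∘ π⁻¹ and 0 otherwise. -/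
noncomputable def permMatrix (n d : ℕ) (π : Equiv.Perm (Fin n)) :
    Matrix (Fin n → Fin d) (Fin n → Fin d) ℂ :=
  Matrix.of fun f g => if f = g ∘ ⇑π⁻¹ then 1 else 0

open Finset Polynomial Module

theorem spectrum_subset_rootSet_of_aeval_eq_zero {K A : Type*} [Field K] [Ring A] [Algebra K A]
    {a : A} {p : K[X]} (hp : p ≠ 0) (ha : aeval a p = 0) :
    spectrum K a ⊆ p.rootSet K := by
  intro μ hμ
  have h := spectrum.subset_polynomial_aeval a p ⟨μ, hμ, rfl⟩
  rw [ha] at h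
  refine mem_rootSet.mpr ⟨hp, ?_⟩
  by_contra hne
  exact h (spectrum.mem_resolventSet_iff.mpr
    (by simpa using (Ne.isUnit hne).map (algebraMap K A)))

theorem Subalgebra.ncard_spectrum_le_finrank {K A : Type*} [Field K] [Ring A] [Algebra K A]
    (S : Subalgebra K A) [FiniteDimensional K S] {a : A} (ha : a ∈ S) :
    (spectrum K a).ncard ≤ finrank K S := by
  set p := minpoly K (⟨a, ha⟩ : S)
  have hp : p ≠ 0 := minpoly.ne_zero (Algebra.IsIntegral.isIntegral _)
  have hsub : spectrum K a ⊆ p.rootSet K :=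
    (spectrum.subset_subalgebra (⟨a, ha⟩ : S)).trans
      (spectrum_subset_rootSet_of_aeval_eq_zero hp (minpoly.aeval K _))
  calc (spectrum K a).ncard ≤ (p.rootSet K).ncard := Set.ncard_le_ncard hsub (rootSet_finite _ _)
    _ ≤ p.natDegree := ncard_rootSet_le _ _
    _ ≤ finrank K S := minpoly.natDegree_le _

section FiberCard

variable {ι β : Type*} [Fintype ι] [DecidableEq β]

-- The type of `F` in the sense of the method of types; the counts are bounded so that there
-- are only `(card ι + 1) ^ card β` types.
def fiberCard (F : ι → β) (b : β) : Fin (Fintype.card ι + 1) :=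
  ⟨#{i | F i = b}, Nat.lt_succ_of_le (card_le_univ _)⟩

theorem exists_perm_comp_eq_of_fiberCard_eq {F G : ι → β} (h : fiberCard F = fiberCard G) :
    ∃ σ : Equiv.Perm ι, G ∘ σ = F := by
  have hcard (b : β) : Fintype.card {i // F i = b} = Fintype.card {i // G i = b} := by
    simpa [Fintype.card_subtype, fiberCard] using congrArg Fin.val (congrFun h b)
  exact ⟨Equiv.ofFiberEquiv fun b => Fintype.equivOfCardEq (hcard b),
    funext <| Equiv.ofFiberEquiv_map _⟩

end FiberCard

section InvariantMatrix

variable {ι α R : Type*} [Fintype ι] [DecidableEq α] [Semiring R]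

def ofPairFiberCard :
    ((α × α → Fin (Fintype.card ι + 1)) → R) →ₗ[R] Matrix (ι → α) (ι → α) R where
  toFun c := of fun f g => c (fiberCard (Function.prod f g))
  map_add' _ _ := rfl
  map_smul' _ _ := rfl

theorem mem_range_ofPairFiberCard {Y : Matrix (ι → α) (ι → α) R}
    (hY : ∀ (σ : Equiv.Perm ι) f g, Y (f ∘ σ) (g ∘ σ) = Y f g) :
    Y ∈ LinearMap.range (ofPairFiberCard (ι := ι)) := by
  let type (p : (ι → α) × (ι → α)) := fiberCard (Function.prod p.1 p.2)
  have hfactors : Function.FactorsThrough (fun p => Y p.1 p.2) type := by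
    rintro ⟨f, g⟩ ⟨f', g'⟩ h
    obtain ⟨σ, hσ⟩ := exists_perm_comp_eq_of_fiberCard_eq h
    have hf : f' ∘ σ = f := congrArg (Prod.fst ∘ ·) hσ
    have hg : g' ∘ σ = g := congrArg (Prod.snd ∘ ·) hσ
    simp only [← hf, ← hg, hY]
  refine ⟨Function.extend type (fun p => Y p.1 p.2) 0, ?_⟩
  ext f g
  exact hfactors.extend_apply _ (f, g)

theorem finrank_le_of_forall_comp_perm [Fintype α] {K : Type*} [Field K]
    (V : Submodule K (Matrix (ι → α) (ι → α) K))
    (hV : ∀ Y ∈ V, ∀ (σ : Equiv.Perm ι) f g, Y (f ∘ σ) (g ∘ σ) = Y f g) :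
    finrank K V ≤ (Fintype.card ι + 1) ^ (Fintype.card α ^ 2) := by
  calc finrank K V ≤ finrank K (LinearMap.range (ofPairFiberCard (ι := ι) (α := α) (R := K))) :=
        Submodule.finrank_mono fun Y hY => mem_range_ofPairFiberCard (hV Y hY)
    _ ≤ finrank K ((α × α → Fin (Fintype.card ι + 1)) → K) := LinearMap.finrank_range_le _
    _ = (Fintype.card ι + 1) ^ (Fintype.card α ^ 2) := by simp [sq]

end InvariantMatrix

theorem permMatrix_eq_toMatrix (n d : ℕ) (π : Equiv.Perm (Fin n)) :
    permMatrix n d π = (π.symm.arrowCongr (Equiv.refl (Fin d))).toPEquiv.toMatrix := by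
  ext f g
  simp only [permMatrix, Equiv.Perm.coe_inv, Equiv.eq_comp_symm, of_apply, PEquiv.toMatrix_apply,
    Equiv.toPEquiv_apply, Option.mem_def, Option.some.injEq]
  rfl

theorem apply_comp_eq_of_mem_centralizer_permMatrix {n d : ℕ}
    {Y : Matrix (Fin n → Fin d) (Fin n → Fin d) ℂ}
    (hY : Y ∈ Subalgebra.centralizer ℂ (Set.range (permMatrix n d)))
    (π : Equiv.Perm (Fin n)) (f g : Fin n → Fin d) : Y (f ∘ π) (g ∘ π) = Y f g := by
  have h := (Subalgebra.mem_centralizer_iff ℂ).mp hY _ ⟨π, rfl⟩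
  rw [permMatrix_eq_toMatrix, PEquiv.toMatrix_toPEquiv_mul, PEquiv.mul_toMatrix_toPEquiv] at h
  calc Y (f ∘ π) (g ∘ π) = Y f (g ∘ π ∘ π.symm) := congrFun (congrFun h f) (g ∘ π)
    _ = Y f g := by simp

theorem finrank_centralizer_permMatrix_le (n d : ℕ) :
    finrank ℂ (Subalgebra.centralizer ℂ (Set.range (permMatrix n d))) ≤ (n + 1) ^ (d ^ 2) := by
  simpa [Subalgebra.finrank_toSubmodule] using finrank_le_of_forall_comp_perm
    (Subalgebra.toSubmodule _) fun _ hY => apply_comp_eq_of_mem_centralizer_permMatrix hY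

theorem perm_invariant_spectrum_card_general
    (n d : ℕ)
    (X : Matrix (Fin n → Fin d) (Fin n → Fin d) ℂ)
    (hX : ∀ π : Equiv.Perm (Fin n), permMatrix n d π * X = X * permMatrix n d π) :
    (spectrum ℂ X).ncard ≤ (n + 1) ^ d * (n + d) ^ (d ^ 2) := by
  set S := Subalgebra.centralizer ℂ (Set.range (permMatrix n d))
  have hXS : X ∈ S := (Subalgebra.mem_centralizer_iff ℂ).mpr (Set.forall_mem_range.mpr hX)
  have hpow : (n + 1) ^ (d ^ 2) ≤ (n + d) ^ (d ^ 2) := by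
    rcases d with _ | d
    · simp
    · gcongr; omega
  calc (spectrum ℂ X).ncard ≤ finrank ℂ S := S.ncard_spectrum_le_finrank hXS
    _ ≤ (n + 1) ^ (d ^ 2) := finrank_centralizer_permMatrix_le n d
    _ ≤ (n + d) ^ (d ^ 2) := hpow
    _ ≤ (n + 1) ^ d * (n + d) ^ (d ^ 2) := Nat.le_mul_of_pos_left _ (by positivity)

/-- a permutation-invariant operator on (ℂ^d)^{⊗n} has at most
(n+1)^d · (n+d)^(d²) distinct eigenvalues. -/
theorem perm_invariant_spectrum_card
    (n d : ℕ) (hn : 0 < n) (hd : 0 < d)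
    (X : Matrix (Fin n → Fin d) (Fin n → Fin d) ℂ)
    (hX : ∀ π : Equiv.Perm (Fin n), permMatrix n d π * X = X * permMatrix n d π) :
    (spectrum ℂ X).ncard ≤ (n + 1) ^ d * (n + d) ^ (d ^ 2) :=
  perm_invariant_spectrum_card_general n d X hX
end
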